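/- Let r ≥ 1 and m ≥ 1 be integers, q = 2^m, and let D be the q²×q² matrix over 𝔽_q with rows and columns indexed by 𝔽_q × 𝔽_q and entries D((x₁,x₂),(y₁,y₂)) = (x₁^{2^r}·y₁ + x₁·y₁^{2^r} + x₂ + y₂)^{q−1}. Then rank(D) ≤ N_m^{(r)}. -/

import Mathlib

/-- `Lessdot l₁ l₂ s` means `l₁ + l₂ ⋖ s`: for every bit position `i`,
the binary digits satisfy `(l₁)ᵢ + (l₂)ᵢ ≤ (s)ᵢ`. -/
def Lessdot (l₁ l₂ s : ℕ) : Prop :=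
  ∀ i : ℕ, (l₁.testBit i).toNat + (l₂.testBit i).toNat ≤ (s.testBit i).toNat

open scoped Classical in
/-- `BSet r s = B_s^{(r)} = {2^r·l₁ + l₂ : l₁ + l₂ ⋖ s}`.
(Note `l₁ + l₂ ⋖ s` forces `l₁, l₂ ≤ s`, so the ranges capture the whole set.) -/
noncomputable def BSet (r s : ℕ) : Finset ℕ :=
  ((Finset.range (s + 1) ×ˢ Finset.range (s + 1)).filter
    (fun p => Lessdot p.1 p.2 s)).image (fun p => 2 ^ r * p.1 + p.2)

/-- `Nnum r m = N_m^{(r)} = Σ_{s=0}^{2^m−1} |B_s^{(r)}|`. -/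
noncomputable def Nnum (r m : ℕ) : ℕ := ∑ s ∈ Finset.range (2 ^ m), (BSet r s).card

namespace Stmt19Aux

open Finset

lemma sum_two_pow (m : ℕ) : ∑ i ∈ Finset.range m, 2 ^ i = 2 ^ m - 1 := by
  induction m with
  | zero => simp
  | succ n ih =>
    have h1 : 1 ≤ 2 ^ n := Nat.one_le_two_pow
    rw [Finset.sum_range_succ, ih, pow_succ]
    omega

lemma sum_ite_lt (m : ℕ) (f : Fin m → Bool) :
    (∑ i : Fin m, if f i then 2 ^ (i : ℕ) else 0) < 2 ^ m := by
  have h1 : 1 ≤ 2 ^ m := Nat.one_le_two_pow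
  calc (∑ i : Fin m, if f i then 2 ^ (i : ℕ) else 0)
      ≤ ∑ i : Fin m, 2 ^ (i : ℕ) := Finset.sum_le_sum (fun i _ => by split <;> simp)
    _ = 2 ^ m - 1 := by rw [Fin.sum_univ_eq_sum_range]; exact sum_two_pow m
    _ < 2 ^ m := by omega

lemma testBit_sum_ite (m : ℕ) (f : Fin m → Bool) (j : ℕ) :
    (∑ i : Fin m, if f i then 2 ^ (i : ℕ) else 0).testBit j
      = if h : j < m then f ⟨j, h⟩ else false := by
  induction m with
  | zero => simp
  | succ n ih =>
    rw [Fin.sum_univ_castSucc]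
    simp only [Fin.coe_castSucc]
    cases hl : f (Fin.last n) with
    | false =>
      simp only [Bool.false_eq_true, if_false, add_zero]
      rw [ih (fun i => f i.castSucc)]
      rcases lt_trichotomy j n with h | h | h
      · rw [dif_pos h, dif_pos (by omega)]
        rfl
      · subst h
        rw [dif_neg (by omega), dif_pos (by omega)]
        have : (⟨j, by omega⟩ : Fin (j + 1)) = Fin.last j := rfl
        rw [this, hl]
      · rw [dif_neg (by omega), dif_neg (by omega)]
    | true =>
      simp only [if_true]
      have hS := sum_ite_lt n (fun i => f i.castSucc)
      have hrw : (∑ i : Fin n, if f i.castSucc then 2 ^ (i : ℕ) else 0)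
            + 2 ^ ((Fin.last n : Fin (n + 1)) : ℕ)
          = 2 ^ n * 1 + (∑ i : Fin n, if f i.castSucc then 2 ^ (i : ℕ) else 0) := by
        rw [Fin.val_last]; ring
      rw [hrw, Nat.testBit_two_pow_mul_add 1 hS j]
      rcases lt_trichotomy j n with h | h | h
      · rw [if_pos h, ih (fun i => f i.castSucc), dif_pos h, dif_pos (by omega)]
        rfl
      · subst h
        rw [if_neg (by omega), Nat.sub_self, dif_pos (by omega)]
        have h1 : Nat.testBit 1 0 = true := rfl
        rw [h1]
        have : (⟨j, by omega⟩ : Fin (j + 1)) = Fin.last j := rfl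
        rw [this, hl]
      · rw [if_neg (by omega), dif_neg (by omega)]
        have : (1 : ℕ) = 2 ^ 0 := rfl
        rw [this, Nat.testBit_two_pow_of_ne (by omega)]

lemma rank_add_le' {K n o : Type} [Field K] [Fintype n] [Fintype o]
    (A B : Matrix o n K) : (A + B).rank ≤ A.rank + B.rank := by
  classical
  have hsub : LinearMap.range (A + B).mulVecLin ≤
      LinearMap.range A.mulVecLin ⊔ LinearMap.range B.mulVecLin := by
    rw [Matrix.mulVecLin_add]
    rintro x ⟨v, rfl⟩
    exact Submodule.mem_sup.2 ⟨_, ⟨v, rfl⟩, _, ⟨v, rfl⟩, rfl⟩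
  exact le_trans (Submodule.finrank_mono hsub)
    (Submodule.finrank_add_le_finrank_add_finrank _ _)

lemma rank_sum_le {K n o ι : Type} [Field K] [Fintype n] [Fintype o]
    (s : Finset ι) (M : ι → Matrix o n K) :
    (∑ i ∈ s, M i).rank ≤ ∑ i ∈ s, (M i).rank := by
  classical
  induction s using Finset.induction with
  | empty => simp
  | insert _ _ h ih =>
    rw [Finset.sum_insert h, Finset.sum_insert h]
    exact le_trans (rank_add_le' _ _) (add_le_add_right ih _)

lemma rank_vmv_le {K n o : Type} [Field K] [Fintype n] [Fintype o] [DecidableEq n]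
    (w : o → K) (v : n → K) : (Matrix.vecMulVec w v).rank ≤ 1 := by
  rw [Matrix.vecMulVec_eq (Fin 1)]
  refine le_trans (Matrix.rank_mul_le_right _ _) ?_
  simpa using Matrix.rank_le_card_height (Matrix.replicateRow (Fin 1) v)

/-- The `x`-part of the factor chosen by `j` in position `i`. -/
def cx {F : Type} [Monoid F] (r : ℕ) {m : ℕ} (x : F × F) (i : Fin m) (j : Fin 4) : F :=
  if j = 0 then x.1 ^ (2 ^ r * 2 ^ (i : ℕ))
  else if j = 1 then x.1 ^ (2 ^ (i : ℕ))
  else if j = 2 then x.2 ^ (2 ^ (i : ℕ))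
  else 1

/-- The exponent of `y.1` in the factor chosen by `j` in position `i`. -/
def ae (r : ℕ) {m : ℕ} (i : Fin m) (j : Fin 4) : ℕ :=
  if j = 0 then 2 ^ (i : ℕ) else if j = 1 then 2 ^ r * 2 ^ (i : ℕ) else 0

/-- The exponent of `y.2` in the factor chosen by `j` in position `i`. -/
def be {m : ℕ} (i : Fin m) (j : Fin 4) : ℕ := if j = 3 then 2 ^ (i : ℕ) else 0

def eExp (r m : ℕ) (t : Fin m → Fin 4) : ℕ := ∑ i, ae r i (t i)
def k4Exp (m : ℕ) (t : Fin m → Fin 4) : ℕ := ∑ i, be i (t i)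
def phi (r m : ℕ) (t : Fin m → Fin 4) : ℕ × ℕ := (k4Exp m t, eExp r m t)

def k1Exp (m : ℕ) (t : Fin m → Fin 4) : ℕ := ∑ i : Fin m, if t i == 0 then 2 ^ (i : ℕ) else 0
def k2Exp (m : ℕ) (t : Fin m → Fin 4) : ℕ := ∑ i : Fin m, if t i == 1 then 2 ^ (i : ℕ) else 0
def sExp (m : ℕ) (t : Fin m → Fin 4) : ℕ := ∑ i : Fin m, if t i != 3 then 2 ^ (i : ℕ) else 0

lemma k4Exp_eq (m : ℕ) (t : Fin m → Fin 4) :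
    k4Exp m t = ∑ i : Fin m, if t i == 3 then 2 ^ (i : ℕ) else 0 := by
  refine Finset.sum_congr rfl fun i _ => ?_
  simp [be]

lemma eExp_eq (r m : ℕ) (t : Fin m → Fin 4) :
    eExp r m t = 2 ^ r * k2Exp m t + k1Exp m t := by
  rw [eExp, k1Exp, k2Exp, Finset.mul_sum, ← Finset.sum_add_distrib]
  refine Finset.sum_congr rfl fun i _ => ?_
  have hj := t i
  revert hj
  generalize t i = j
  intro _
  fin_cases j <;> simp [ae]

lemma k4_add_s (m : ℕ) (t : Fin m → Fin 4) : k4Exp m t + sExp m t = 2 ^ m - 1 := by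
  rw [k4Exp_eq, sExp, ← Finset.sum_add_distrib, ← sum_two_pow m, ← Fin.sum_univ_eq_sum_range]
  refine Finset.sum_congr rfl fun i _ => ?_
  by_cases h : t i = 3 <;> simp [h]

lemma k4Exp_le (m : ℕ) (t : Fin m → Fin 4) : k4Exp m t ≤ 2 ^ m - 1 := by
  have := k4_add_s m t; omega

end Stmt19Aux

open Stmt19Aux Finset in
/-- For `r ≥ 1`, `m ≥ 1`, `q = 2^m`, the matrix `D` over `𝔽_q` indexed
by `𝔽_q × 𝔽_q` with entries
`D((x₁,x₂),(y₁,y₂)) = (x₁^{2^r}·y₁ + x₁·y₁^{2^r} + x₂ + y₂)^{q−1}`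
satisfies `rank(D) ≤ N_m^{(r)}`. -/
theorem stmt_19 (r m : ℕ) (hr : 1 ≤ r) (hm : 1 ≤ m)
    (F : Type) [Field F] [Fintype F] [DecidableEq F]
    (hF : Fintype.card F = 2 ^ m)
    (D : Matrix (F × F) (F × F) F)
    (hD : ∀ x y : F × F, D x y =
      (x.1 ^ (2 ^ r) * y.1 + x.1 * y.1 ^ (2 ^ r) + x.2 + y.2) ^ (2 ^ m - 1)) :
    D.rank ≤ Nnum r m := by
  classical
  -- characteristic 2
  have h2 : (2 : F) = 0 := by
    have hc : ((2 ^ m : ℕ) : F) = 0 := by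
      rw [← hF]; exact Nat.cast_card_eq_zero F
    have : (2 : F) ^ m = 0 := by push_cast at hc; exact hc
    exact pow_eq_zero_iff (by omega) |>.mp this
  have frob : ∀ (a b : F) (k : ℕ), (a + b) ^ 2 ^ k = a ^ 2 ^ k + b ^ 2 ^ k := by
    intro a b k
    induction k with
    | zero => simp
    | succ n ih =>
      rw [pow_succ, pow_mul, pow_mul, pow_mul, ih, add_sq, h2]
      ring
  -- expansion of D into monomials
  have key : ∀ x y : F × F, D x y
      = ∑ t : Fin m → Fin 4,
          (∏ i, cx r x i (t i)) * (y.1 ^ eExp r m t * y.2 ^ k4Exp m t) := by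
    intro x y
    rw [hD, ← sum_two_pow m, ← Finset.prod_pow_eq_pow_sum, ← Fin.prod_univ_eq_prod_range]
    have hfac : ∀ i : Fin m,
        (x.1 ^ 2 ^ r * y.1 + x.1 * y.1 ^ 2 ^ r + x.2 + y.2) ^ 2 ^ (i : ℕ)
          = ∑ j : Fin 4, cx r x i j * (y.1 ^ ae r i j * y.2 ^ be i j) := by
      intro i
      rw [frob, frob, frob, Fin.sum_univ_four]
      show (x.1 ^ 2 ^ r * y.1) ^ 2 ^ (i : ℕ) + (x.1 * y.1 ^ 2 ^ r) ^ 2 ^ (i : ℕ)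
            + x.2 ^ 2 ^ (i : ℕ) + y.2 ^ 2 ^ (i : ℕ)
          = x.1 ^ (2 ^ r * 2 ^ (i : ℕ)) * (y.1 ^ 2 ^ (i : ℕ) * y.2 ^ 0)
            + x.1 ^ 2 ^ (i : ℕ) * (y.1 ^ (2 ^ r * 2 ^ (i : ℕ)) * y.2 ^ 0)
            + x.2 ^ 2 ^ (i : ℕ) * (y.1 ^ 0 * y.2 ^ 0)
            + 1 * (y.1 ^ 0 * y.2 ^ 2 ^ (i : ℕ))
      rw [mul_pow, mul_pow, ← pow_mul, ← pow_mul]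
      ring
    rw [Finset.prod_congr rfl (fun i _ => hfac i), Finset.prod_univ_sum,
      Fintype.piFinset_univ]
    refine Finset.sum_congr rfl fun t _ => ?_
    rw [Finset.prod_mul_distrib]
    congr 1
    rw [Finset.prod_mul_distrib, Finset.prod_pow_eq_pow_sum, Finset.prod_pow_eq_pow_sum]
    rfl
  -- write D as a sum of rank-one matrices, indexed by P
  set P : Finset (ℕ × ℕ) := Finset.image (phi r m) Finset.univ with hP
  have hDsum : D = ∑ p ∈ P, Matrix.vecMulVec
      (fun x : F × F => ∑ t ∈ Finset.univ.filter (fun t => phi r m t = p),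
        ∏ i, cx r x i (t i))
      (fun y : F × F => y.1 ^ p.2 * y.2 ^ p.1) := by
    ext x y
    rw [Matrix.sum_apply, key]
    rw [← Finset.sum_fiberwise_of_maps_to
      (g := phi r m) (f := fun t => (∏ i, cx r x i (t i)) * (y.1 ^ eExp r m t * y.2 ^ k4Exp m t))
      (fun t _ => Finset.mem_image_of_mem _ (Finset.mem_univ t))]
    refine Finset.sum_congr rfl fun p _ => ?_
    rw [Matrix.vecMulVec_apply, Finset.sum_mul]
    refine Finset.sum_congr rfl fun t ht => ?_
    have hpt : phi r m t = p := (Finset.mem_filter.1 ht).2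
    rw [← hpt]
    rfl
  -- rank bound by the number of monomials
  have hrank : D.rank ≤ P.card := by
    rw [hDsum]
    refine le_trans (rank_sum_le P _) ?_
    calc ∑ p ∈ P, (Matrix.vecMulVec _ (fun y : F × F => y.1 ^ p.2 * y.2 ^ p.1)).rank
        ≤ ∑ _p ∈ P, 1 := Finset.sum_le_sum fun p _ => rank_vmv_le _ _
      _ = P.card := by simp
  refine le_trans hrank ?_
  -- the number of monomials is at most Nnum
  have hN : Nnum r m = ((Finset.range (2 ^ m)).sigma (fun s => BSet r s)).card := by
    rw [Finset.card_sigma]; rfl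
  rw [hN]
  refine Finset.card_le_card_of_injOn
    (fun p => ⟨2 ^ m - 1 - p.1, p.2⟩) ?_ ?_
  · -- maps to
    rintro p hp
    obtain ⟨t, -, rfl⟩ := Finset.mem_image.1 hp
    have hks := k4_add_s m t
    have hsub : 2 ^ m - 1 - (phi r m t).1 = sExp m t := by
      simp only [phi]; omega
    rw [Finset.mem_coe, Finset.mem_sigma]
    constructor
    · show 2 ^ m - 1 - (phi r m t).1 ∈ Finset.range (2 ^ m)
      have h1 : 1 ≤ 2 ^ m := Nat.one_le_two_pow
      exact Finset.mem_range.2 (by omega)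
    · show (phi r m t).2 ∈ BSet r (2 ^ m - 1 - (phi r m t).1)
      rw [hsub] -- eExp ∈ BSet r (sExp m t)
      have hk1 : k1Exp m t ≤ sExp m t := by
        refine Nat.le_of_testBit fun j hj => ?_
        rw [k1Exp, testBit_sum_ite] at hj
        rw [sExp, testBit_sum_ite]
        by_cases h : j < m
        · rw [dif_pos h] at hj ⊢
          simp only [beq_iff_eq] at hj
          simp [bne_iff_ne, hj]
        · rw [dif_neg h] at hj; exact absurd hj (by simp)
      have hk2 : k2Exp m t ≤ sExp m t := by
        refine Nat.le_of_testBit fun j hj => ?_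
        rw [k2Exp, testBit_sum_ite] at hj
        rw [sExp, testBit_sum_ite]
        by_cases h : j < m
        · rw [dif_pos h] at hj ⊢
          simp only [beq_iff_eq] at hj
          simp [bne_iff_ne, hj]
        · rw [dif_neg h] at hj; exact absurd hj (by simp)
      have hld : Lessdot (k2Exp m t) (k1Exp m t) (sExp m t) := by
        intro j
        rw [k1Exp, k2Exp, sExp, testBit_sum_ite, testBit_sum_ite, testBit_sum_ite]
        by_cases h : j < m
        · rw [dif_pos h, dif_pos h, dif_pos h]
          generalize t ⟨j, h⟩ = jj
          fin_cases jj <;> simp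
        · rw [dif_neg h, dif_neg h, dif_neg h]
          simp
      show (phi r m t).2 ∈ BSet r (sExp m t)
      simp only [phi]
      rw [BSet]
      refine Finset.mem_image.2 ⟨(k2Exp m t, k1Exp m t), ?_, (eExp_eq r m t).symm⟩
      refine Finset.mem_filter.2 ⟨Finset.mem_product.2 ⟨?_, ?_⟩, hld⟩
      · exact Finset.mem_range.2 (by omega)
      · exact Finset.mem_range.2 (by omega)
  · -- injective
    rintro p hp p' hp' heq
    obtain ⟨t, -, rfl⟩ := Finset.mem_image.1 hp
    obtain ⟨t', -, rfl⟩ := Finset.mem_image.1 hp'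
    have h1 := k4Exp_le m t
    have h1' := k4Exp_le m t'
    have hfst : 2 ^ m - 1 - (phi r m t).1 = 2 ^ m - 1 - (phi r m t').1 :=
      congrArg Sigma.fst heq
    have hsnd : (phi r m t).2 = (phi r m t').2 := by
      have := congrArg Sigma.snd heq
      simpa using this
    have : (phi r m t).1 = (phi r m t').1 := by
      simp only [phi] at hfst ⊢
      omega
    exact Prod.ext this hsnd
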